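/- arXiv:2403.07641 — 2 statements merged into one kernel-verified Lean document; each statement's English description precedes it below -/
import Mathlib

section
/- For μ > 0, ∫_{ℝ²} e^{ω_μ(z)} ω_μ(z) dz = 8π(log 8 − 2 log μ − 2). -/
open MeasureTheory Real

/-- `ω_μ(z) = log(8μ²/(μ² + |z|²)²)`. -/
noncomputable def omega (μ : ℝ) (z : ℝ × ℝ) : ℝ :=
  Real.log (8 * μ ^ 2 / (μ ^ 2 + (z.1 ^ 2 + z.2 ^ 2)) ^ 2)

/-!
Since `e^{ω_μ}` is the bubble `8μ² / (μ² + |z|²)²`, the integrand is a radial function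
`G(|z|²)` with `G = b log b`, and polar coordinates followed by `s = r²` turn the integral into
`π ∫₀^∞ G(s) ds`. The scaling `s = μ² v` makes this `8 (log 8 - 2 log μ) ∫₀^∞ (1+v)⁻² dv
- 16 ∫₀^∞ log(1+v) (1+v)⁻² dv`; both integrands are nonnegative derivatives of functions vanishing
at infinity, and both integrals equal `1`.
-/

open Set Filter Topology

theorem integral_mul_comp_sq_Ioi (G : ℝ → ℝ) :
    ∫ r in Ioi (0 : ℝ), r * G (r ^ 2) = 2⁻¹ * ∫ s in Ioi (0 : ℝ), G s := by
  rw [← integral_comp_rpow_Ioi_of_pos (g := G) two_pos, ← smul_eq_mul, ← integral_smul]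
  refine setIntegral_congr_fun measurableSet_Ioi fun r _ => ?_
  norm_num [smul_eq_mul, ← mul_assoc]

theorem integral_comp_sq_add_sq (G : ℝ → ℝ) :
    ∫ z : ℝ × ℝ, G (z.1 ^ 2 + z.2 ^ 2) = π * ∫ s in Ioi (0 : ℝ), G s := by
  have hpolar : ∀ p : ℝ × ℝ, p.1 • G ((polarCoord.symm p).1 ^ 2 + (polarCoord.symm p).2 ^ 2)
      = p.1 * G (p.1 ^ 2) * 1 := fun p => by
    simp only [polarCoord_symm_apply, smul_eq_mul, mul_one]
    congr 2
    linear_combination p.1 ^ 2 * sin_sq_add_cos_sq p.2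
  calc ∫ z : ℝ × ℝ, G (z.1 ^ 2 + z.2 ^ 2)
      = ∫ p in Ioi (0 : ℝ) ×ˢ Ioo (-π) π, p.1 * G (p.1 ^ 2) * 1 := by
        simp_rw [← integral_comp_polarCoord_symm, polarCoord_target, hpolar]
    _ = (∫ r in Ioi (0 : ℝ), r * G (r ^ 2)) * ∫ _ in Ioo (-π) π, (1 : ℝ) :=
        setIntegral_prod_mul (fun r => r * G (r ^ 2)) (fun _ => 1) _ _
    _ = π * ∫ s in Ioi (0 : ℝ), G s := by
        rw [integral_mul_comp_sq_Ioi, setIntegral_const, volume_real_Ioo_of_le (by linarith [pi_pos])]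
        ring

theorem integral_Ioi_zero_inv_one_add_sq : ∫ v in Ioi (0 : ℝ), ((1 + v) ^ 2)⁻¹ = 1 := by
  have hderiv : ∀ v ∈ Ici (0 : ℝ), HasDerivAt (fun v : ℝ => -(1 + v)⁻¹) ((1 + v) ^ 2)⁻¹ v := by
    intro v hv
    have h1v : 1 + v ≠ 0 := by have : (0 : ℝ) ≤ v := hv; positivity
    exact (((hasDerivAt_id' v).const_add 1).inv h1v).neg.congr_deriv (by field_simp)
  have hlim : Tendsto (fun v : ℝ => -(1 + v)⁻¹) atTop (𝓝 0) := by
    simpa using (tendsto_atTop_add_const_left atTop (1 : ℝ) tendsto_id).inv_tendsto_atTop.neg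
  rw [integral_Ioi_of_hasDerivAt_of_nonneg' hderiv (fun v _ => by positivity) hlim]
  simp

theorem integral_Ioi_zero_log_one_add_div_sq :
    ∫ v in Ioi (0 : ℝ), log (1 + v) / (1 + v) ^ 2 = 1 := by
  have hderiv : ∀ v ∈ Ici (0 : ℝ),
      HasDerivAt (fun v : ℝ => -((log (1 + v) + 1) / (1 + v))) (log (1 + v) / (1 + v) ^ 2) v := by
    intro v hv
    have h1v : 1 + v ≠ 0 := by have : (0 : ℝ) ≤ v := hv; positivity
    have hlin := (hasDerivAt_id' v).const_add 1
    exact (((hlin.log h1v).add_const 1).div hlin h1v).neg.congr_deriv (by field_simp; ring)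
  have hlim : Tendsto (fun v : ℝ => -((log (1 + v) + 1) / (1 + v))) atTop (𝓝 0) := by
    have ht : Tendsto (fun v : ℝ => 1 + v) atTop atTop :=
      tendsto_atTop_add_const_left atTop 1 tendsto_id
    have := ((isLittleO_log_id_atTop.tendsto_div_nhds_zero.comp ht).add ht.inv_tendsto_atTop).neg
    simp only [add_zero, neg_zero] at this
    refine this.congr fun v => ?_
    simp [add_div]
  have hnonneg : ∀ v ∈ Ioi (0 : ℝ), 0 ≤ log (1 + v) / (1 + v) ^ 2 := fun v (hv : 0 < v) =>
    div_nonneg (log_nonneg (by linarith)) (by positivity)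
  rw [integral_Ioi_of_hasDerivAt_of_nonneg' hderiv hnonneg hlim]
  simp

noncomputable def bubble (μ s : ℝ) : ℝ := 8 * μ ^ 2 / (μ ^ 2 + s) ^ 2

theorem exp_omega {μ : ℝ} (hμ : μ ≠ 0) (z : ℝ × ℝ) :
    exp (omega μ z) = bubble μ (z.1 ^ 2 + z.2 ^ 2) :=
  exp_log (by positivity)

theorem sq_mul_bubble_mul_log_bubble {μ v : ℝ} (hμ : μ ≠ 0) (hv : 1 + v ≠ 0) :
    μ ^ 2 * (bubble μ (μ ^ 2 * v) * log (bubble μ (μ ^ 2 * v)))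
      = 8 * (log 8 - 2 * log μ) * ((1 + v) ^ 2)⁻¹ - 16 * (log (1 + v) / (1 + v) ^ 2) := by
  have hbubble : bubble μ (μ ^ 2 * v) = 8 / (μ * (1 + v)) ^ 2 := by
    unfold bubble
    field_simp
  rw [hbubble, log_div (by norm_num) (by positivity), log_pow, log_mul hμ hv]
  field_simp
  push_cast
  ring

theorem integral_bubble_mul_log_bubble {μ : ℝ} (hμ : μ ≠ 0) :
    ∫ s in Ioi (0 : ℝ), bubble μ s * log (bubble μ s) = 8 * (log 8 - 2 * log μ - 2) := by
  have hscale := integral_comp_mul_left_Ioi' (fun s => bubble μ s * log (bubble μ s)) 0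
    (by positivity : 0 < μ ^ 2)
  have hint₁ : IntegrableOn (fun v : ℝ => ((1 + v) ^ 2)⁻¹) (Ioi 0) :=
    .of_integral_ne_zero (by simp [integral_Ioi_zero_inv_one_add_sq])
  have hint₂ : IntegrableOn (fun v : ℝ => log (1 + v) / (1 + v) ^ 2) (Ioi 0) :=
    .of_integral_ne_zero (by simp [integral_Ioi_zero_log_one_add_div_sq])
  rw [mul_zero] at hscale
  rw [← hscale, smul_eq_mul, ← integral_const_mul,
    setIntegral_congr_fun measurableSet_Ioi fun v (hv : 0 < v) =>
      sq_mul_bubble_mul_log_bubble hμ (by positivity),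
    integral_sub (hint₁.const_mul _) (hint₂.const_mul _), integral_const_mul, integral_const_mul,
    integral_Ioi_zero_inv_one_add_sq, integral_Ioi_zero_log_one_add_div_sq]
  ring

theorem stmt4 (μ : ℝ) (hμ : 0 < μ) :
    (∫ z : ℝ × ℝ, Real.exp (omega μ z) * omega μ z)
      = 8 * π * (Real.log 8 - 2 * Real.log μ - 2) := by
  calc (∫ z : ℝ × ℝ, exp (omega μ z) * omega μ z)
      = ∫ z : ℝ × ℝ, bubble μ (z.1 ^ 2 + z.2 ^ 2) * log (bubble μ (z.1 ^ 2 + z.2 ^ 2)) := by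
        simp_rw [exp_omega hμ.ne']
        rfl
    _ = π * ∫ s in Ioi (0 : ℝ), bubble μ s * log (bubble μ s) :=
        integral_comp_sq_add_sq fun s => bubble μ s * log (bubble μ s)
    _ = 8 * π * (log 8 - 2 * log μ - 2) := by
        rw [integral_bubble_mul_log_bubble hμ.ne']
        ring
end

section
/- For every s > 1, the Riemann zeta value ζ(s) satisfies ζ(s) = (1/Γ(s)) ∫₀^∞ log^{s−1}(u+1)/(u(u+1)) du. -/
open MeasureTheory Real

theorem stmt13 (s : ℝ) (hs : 1 < s) :
    (∑' n : ℕ, ((n : ℝ) + 1) ^ (-s))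
      = (1 / Real.Gamma s)
        * ∫ u in Set.Ioi (0 : ℝ), Real.log (u + 1) ^ (s - 1) / (u * (u + 1)) := by
  have hs0 : 0 < s := by linarith
  have hΓ : 0 < Real.Gamma s := Real.Gamma_pos_of_pos hs0
  -- Step A: change of variables u = exp t - 1
  have himg : (fun t : ℝ => Real.exp t - 1) '' Set.Ioi 0 = Set.Ioi (0 : ℝ) := by
    ext y
    constructor
    · rintro ⟨t, ht, rfl⟩
      have : (1 : ℝ) < Real.exp t := by
        calc (1 : ℝ) = Real.exp 0 := (Real.exp_zero).symm
        _ < Real.exp t := Real.exp_lt_exp.2 ht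
      simpa using this
    · intro hy
      refine ⟨Real.log (y + 1), ?_, ?_⟩
      · have : (1 : ℝ) < y + 1 := by simpa using hy
        simpa using Real.log_pos this
      · have : (0 : ℝ) < y + 1 := by linarith [Set.mem_Ioi.1 hy]
        simp [Real.exp_log this]
  have hinj : Set.InjOn (fun t : ℝ => Real.exp t - 1) (Set.Ioi 0) := by
    intro a _ b _ h
    have : Real.exp a = Real.exp b := by dsimp at h; linarith
    exact Real.exp_injective this
  have hderiv : ∀ x ∈ Set.Ioi (0 : ℝ),
      HasDerivWithinAt (fun t : ℝ => Real.exp t - 1) (Real.exp x) (Set.Ioi 0) x := by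
    intro x _
    exact ((Real.hasDerivAt_exp x).sub_const 1).hasDerivWithinAt
  have hsub : (∫ u in Set.Ioi (0 : ℝ), Real.log (u + 1) ^ (s - 1) / (u * (u + 1)))
      = ∫ t in Set.Ioi (0 : ℝ), t ^ (s - 1) / (Real.exp t - 1) := by
    have key := integral_image_eq_integral_abs_deriv_smul measurableSet_Ioi hderiv hinj
      (fun u : ℝ => Real.log (u + 1) ^ (s - 1) / (u * (u + 1)))
    rw [himg] at key
    rw [key]
    refine setIntegral_congr_fun measurableSet_Ioi (fun t ht => ?_)
    have ht0 : (0 : ℝ) < t := ht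
    have het : (1 : ℝ) < Real.exp t := by
      calc (1 : ℝ) = Real.exp 0 := (Real.exp_zero).symm
      _ < Real.exp t := Real.exp_lt_exp.2 ht0
    have he0 : Real.exp t - 1 ≠ 0 := by linarith
    have hene : Real.exp t ≠ 0 := Real.exp_ne_zero t
    simp only [smul_eq_mul, abs_of_pos (Real.exp_pos t)]
    rw [show Real.exp t - 1 + 1 = Real.exp t by ring, Real.log_exp]
    field_simp
  -- Step B: series expansion of the t-integral
  set F : ℕ → ℝ → ℝ := fun n t => t ^ (s - 1) * Real.exp (-(((n : ℝ) + 1) * t)) with hF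
  have hn1 : ∀ n : ℕ, (0 : ℝ) < (n : ℝ) + 1 := fun n => by positivity
  have hInt : ∀ n : ℕ, Integrable (F n) (volume.restrict (Set.Ioi 0)) := by
    intro n
    have base : IntegrableOn (fun x : ℝ => Real.exp (-x) * x ^ (s - 1)) (Set.Ioi 0) :=
      Real.GammaIntegral_convergent hs0
    refine Integrable.mono' base ?_ ?_
    · apply Measurable.aestronglyMeasurable
      exact (measurable_id.pow_const _).mul
        (((measurable_const.mul measurable_id).neg).exp)
    · rw [ae_restrict_iff' measurableSet_Ioi]
      filter_upwards with t
      intro ht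
      have ht0 : (0 : ℝ) < t := ht
      have h1 : Real.exp (-(((n : ℝ) + 1) * t)) ≤ Real.exp (-t) := by
        apply Real.exp_le_exp.2
        nlinarith [hn1 n]
      have h2 : (0 : ℝ) ≤ t ^ (s - 1) := Real.rpow_nonneg ht0.le _
      rw [Real.norm_eq_abs, abs_of_nonneg (by positivity)]
      calc t ^ (s - 1) * Real.exp (-(((n : ℝ) + 1) * t))
          ≤ t ^ (s - 1) * Real.exp (-t) := by
            exact mul_le_mul_of_nonneg_left h1 h2
        _ = Real.exp (-t) * t ^ (s - 1) := by ring
  have hval : ∀ n : ℕ, (∫ t in Set.Ioi (0 : ℝ), F n t) = ((n : ℝ) + 1) ^ (-s) * Real.Gamma s := by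
    intro n
    rw [Real.integral_rpow_mul_exp_neg_mul_Ioi hs0 (hn1 n)]
    congr 1
    rw [one_div, ← Real.rpow_neg_one, ← Real.rpow_mul (hn1 n).le]
    norm_num
  have hFnonneg : ∀ n : ℕ, ∀ t ∈ Set.Ioi (0 : ℝ), 0 ≤ F n t := by
    intro n t ht
    have ht0 : (0 : ℝ) < t := ht
    positivity
  have hNorm : ∀ n : ℕ, (∫ t in Set.Ioi (0 : ℝ), ‖F n t‖) = ((n : ℝ) + 1) ^ (-s) * Real.Gamma s := by
    intro n
    rw [← hval n]
    refine setIntegral_congr_fun measurableSet_Ioi (fun t ht => ?_)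
    exact Real.norm_of_nonneg (hFnonneg n t ht)
  have hSummable : Summable (fun n : ℕ => ((n : ℝ) + 1) ^ (-s)) := by
    have h0 : Summable (fun n : ℕ => ((n : ℝ) ^ s)⁻¹) := Real.summable_nat_rpow_inv.2 hs
    have h1 := (summable_nat_add_iff 1).2 h0
    refine h1.congr (fun n => ?_)
    rw [Real.rpow_neg (hn1 n).le]
    push_cast
    ring_nf
  have hNormSummable : Summable (fun n : ℕ => ∫ t in Set.Ioi (0 : ℝ), ‖F n t‖) := by
    refine ((hSummable.mul_right (Real.Gamma s)).congr (fun n => ?_))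
    rw [hNorm n]
  have hsum := hasSum_integral_of_summable_integral_norm hInt hNormSummable
  have htsum_eq : (∫ t in Set.Ioi (0 : ℝ), (∑' n : ℕ, F n t))
      = ∫ t in Set.Ioi (0 : ℝ), t ^ (s - 1) / (Real.exp t - 1) := by
    refine setIntegral_congr_fun measurableSet_Ioi (fun t ht => ?_)
    have ht0 : (0 : ℝ) < t := ht
    have hr1 : Real.exp (-t) < 1 := by
      calc Real.exp (-t) < Real.exp 0 := Real.exp_lt_exp.2 (by linarith)
      _ = 1 := Real.exp_zero
    have hgeo := hasSum_geometric_of_lt_one (Real.exp_pos (-t)).le hr1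
    have hgeo2 := (hgeo.mul_left (Real.exp (-t))).mul_left (t ^ (s - 1))
    have hterm : ∀ n : ℕ, F n t = t ^ (s - 1) * (Real.exp (-t) * Real.exp (-t) ^ n) := by
      intro n
      have he : Real.exp (-(((n : ℝ) + 1) * t)) = Real.exp (-t) * Real.exp (-t) ^ n := by
        rw [← Real.exp_nat_mul, ← Real.exp_add]
        congr 1
        ring
      simp only [hF, he]
    have hlim : t ^ (s - 1) * (Real.exp (-t) * (1 - Real.exp (-t))⁻¹)
        = t ^ (s - 1) / (Real.exp t - 1) := by
      have het : (1 : ℝ) < Real.exp t := by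
        calc (1 : ℝ) = Real.exp 0 := (Real.exp_zero).symm
        _ < Real.exp t := Real.exp_lt_exp.2 ht0
      have h1 : (1 : ℝ) - Real.exp (-t) ≠ 0 := by
        have : Real.exp (-t) < 1 := hr1
        intro h; nlinarith
      have h2 : Real.exp t - 1 ≠ 0 := by linarith
      rw [Real.exp_neg]
      field_simp
    have : HasSum (fun n : ℕ => F n t) (t ^ (s - 1) / (Real.exp t - 1)) := by
      rw [← hlim]
      exact hgeo2.congr_fun hterm
    exact this.tsum_eq
  have hmain : (∑' n : ℕ, ((n : ℝ) + 1) ^ (-s)) * Real.Gamma s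
      = ∫ t in Set.Ioi (0 : ℝ), t ^ (s - 1) / (Real.exp t - 1) := by
    rw [← htsum_eq, ← hsum.tsum_eq, ← tsum_mul_right]
    exact tsum_congr (fun n => (hval n).symm ▸ rfl)
  rw [hsub, ← hmain]
  field_simp
end
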